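/- Let A be a finite multiset in ℤ_p such that the difference multiset A − A is weakly equivalent to some p-adic non-Liouville finite multiset. Then A has p-adic non-Liouville differences (i.e., A − A is itself p-adic non-Liouville). -/
import Mathlib


open Filter

/-- `padicDist p m a` is `d_m(a) = min {|h| : h ∈ ℤ, a ≡ h (mod p^m ℤ_p)}`. -/
noncomputable def padicDist (p : ℕ) [Fact p.Prime] (m : ℕ) (a : ℤ_[p]) : ℕ :=
  sInf {k : ℕ | ∃ h : ℤ, h.natAbs = k ∧ (p : ℤ_[p]) ^ m ∣ a - (h : ℤ_[p])}

/-- `a ∈ ℤ_p` is a p-adic Liouville number if `a ∉ ℤ` and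
`liminf_{m→∞} d_m(a)/m < +∞`. -/
def IsPadicLiouville (p : ℕ) [Fact p.Prime] (a : ℤ_[p]) : Prop :=
  (∀ n : ℤ, a ≠ (n : ℤ_[p])) ∧
    liminf (fun m : ℕ => (((padicDist p m a : ℝ) / (m : ℝ)) : EReal)) atTop < (⊤ : EReal)

/-- Two finite multisets in `ℤ_p` are weakly equivalent: there exist orderings
`a_1,…,a_n`, `b_1,…,b_n`, a constant `c > 0`, and for each `m ≥ 1` a permutation `σ_m`
with `d_m(a_{σ_m i} - b_i) ≤ c m`. -/
def WeaklyEquivalent (p : ℕ) [Fact p.Prime] (A B : Multiset ℤ_[p]) : Prop :=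
  ∃ (n : ℕ) (a b : Fin n → ℤ_[p]) (c : ℝ),
    A = ↑(List.ofFn a) ∧ B = ↑(List.ofFn b) ∧ 0 < c ∧
    ∀ m : ℕ, 1 ≤ m → ∃ σ : Equiv.Perm (Fin n),
      ∀ i, (padicDist p m (a (σ i) - b i) : ℝ) ≤ c * m

/-- Two finite multisets in `ℤ_p` are equivalent: there exist orderings with
`a_i - b_i ∈ ℤ` for all `i`. -/
def EquivalentMultisets (p : ℕ) [Fact p.Prime] (A B : Multiset ℤ_[p]) : Prop :=
  ∃ (n : ℕ) (a b : Fin n → ℤ_[p]),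
    A = ↑(List.ofFn a) ∧ B = ↑(List.ofFn b) ∧
    ∀ i, ∃ k : ℤ, a i - b i = (k : ℤ_[p])

/-- `P 0, …, P (k-1)` form a Liouville partition of `A`: their multiset union is `A` and
no two elements of distinct parts differ by an integer or a p-adic Liouville number. -/
def IsLiouvillePartition (p : ℕ) [Fact p.Prime] (A : Multiset ℤ_[p]) {k : ℕ}
    (P : Fin k → Multiset ℤ_[p]) : Prop :=
  (∑ g, P g) = A ∧
    ∀ g h : Fin k, g ≠ h → ∀ x ∈ P g, ∀ y ∈ P h,
      ¬ ((∃ n : ℤ, x - y = (n : ℤ_[p])) ∨ IsPadicLiouville p (x - y))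

/-- A multiset is p-adic non-Liouville if it contains no p-adic Liouville number. -/
def PadicNonLiouvilleMultiset (p : ℕ) [Fact p.Prime] (A : Multiset ℤ_[p]) : Prop :=
  ∀ a ∈ A, ¬ IsPadicLiouville p a

/-- The difference multiset `A - A = {a - a' : a, a' ∈ A}`. -/
noncomputable def diffMultiset (p : ℕ) [Fact p.Prime] (A : Multiset ℤ_[p]) : Multiset ℤ_[p] :=
  A.bind fun x => A.map fun y => x - y

section aux
variable (p : ℕ) [Fact p.Prime]

lemma padicDist_set_nonempty (m : ℕ) (a : ℤ_[p]) :
    {k : ℕ | ∃ h : ℤ, h.natAbs = k ∧ (p : ℤ_[p]) ^ m ∣ a - (h : ℤ_[p])}.Nonempty := by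
  refine ⟨((a.appr m : ℤ)).natAbs, (a.appr m : ℤ), rfl, ?_⟩
  have := PadicInt.appr_spec m a
  rw [Ideal.mem_span_singleton] at this
  simpa using this

lemma padicDist_spec (m : ℕ) (a : ℤ_[p]) :
    ∃ h : ℤ, h.natAbs = padicDist p m a ∧ (p : ℤ_[p]) ^ m ∣ a - (h : ℤ_[p]) :=
  Nat.sInf_mem (padicDist_set_nonempty p m a)

lemma padicDist_le (m : ℕ) (a : ℤ_[p]) {h : ℤ} (hd : (p : ℤ_[p]) ^ m ∣ a - (h : ℤ_[p])) :
    padicDist p m a ≤ h.natAbs :=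
  Nat.sInf_le ⟨h, rfl, hd⟩

lemma padicDist_add_le (m : ℕ) (a b : ℤ_[p]) :
    padicDist p m (a + b) ≤ padicDist p m a + padicDist p m b := by
  obtain ⟨h1, e1, d1⟩ := padicDist_spec p m a
  obtain ⟨h2, e2, d2⟩ := padicDist_spec p m b
  have hd : (p : ℤ_[p]) ^ m ∣ (a + b) - ((h1 + h2 : ℤ) : ℤ_[p]) := by
    have : (a + b) - ((h1 + h2 : ℤ) : ℤ_[p]) = (a - h1) + (b - h2) := by push_cast; ring
    rw [this]; exact dvd_add d1 d2
  calc padicDist p m (a + b) ≤ (h1 + h2).natAbs := padicDist_le p m _ hd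
    _ ≤ h1.natAbs + h2.natAbs := Int.natAbs_add_le _ _
    _ = padicDist p m a + padicDist p m b := by rw [e1, e2]

lemma padicDist_neg_le (m : ℕ) (a : ℤ_[p]) : padicDist p m (-a) ≤ padicDist p m a := by
  obtain ⟨h, e, d⟩ := padicDist_spec p m a
  have hd : (p : ℤ_[p]) ^ m ∣ (-a) - ((-h : ℤ) : ℤ_[p]) := by
    have : (-a) - ((-h : ℤ) : ℤ_[p]) = -(a - h) := by push_cast; ring
    rw [this]; exact Dvd.dvd.neg_right d
  calc padicDist p m (-a) ≤ (-h).natAbs := padicDist_le p m _ hd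
    _ = padicDist p m a := by rw [Int.natAbs_neg, e]

lemma padicDist_neg (m : ℕ) (a : ℤ_[p]) : padicDist p m (-a) = padicDist p m a :=
  le_antisymm (padicDist_neg_le p m a) (by simpa using padicDist_neg_le p m (-a))

lemma padicDist_mono (a : ℤ_[p]) {m m' : ℕ} (hmm : m ≤ m') :
    padicDist p m a ≤ padicDist p m' a := by
  obtain ⟨h, e, d⟩ := padicDist_spec p m' a
  have := padicDist_le p m a (dvd_trans (pow_dvd_pow _ hmm) d)
  omega

lemma padicDist_int_le (m : ℕ) (k : ℤ) : padicDist p m (k : ℤ_[p]) ≤ k.natAbs :=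
  padicDist_le p m _ (by simp)

/-- If `d_m(x)` grows at most linearly for all large `m`, then `x` is an integer. -/
lemma eq_int_of_eventually_padicDist_le (x : ℤ_[p]) (c' : ℝ)
    (hev : ∀ᶠ m in atTop, (padicDist p m x : ℝ) ≤ c' * m) : ∃ k : ℤ, x = (k : ℤ_[p]) := by
  have hp1 : 1 < (p : ℝ) := by exact_mod_cast (Fact.out : p.Prime).one_lt
  have hp0 : (0 : ℝ) < p := lt_trans one_pos hp1
  -- growth: eventually c'*(2m+2) < p^m
  have hgrow : ∀ᶠ m : ℕ in atTop, c' * (2 * (m : ℝ) + 2) < (p : ℝ) ^ m := by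
    have hr : ‖(p : ℝ)⁻¹‖ < 1 := by
      rw [Real.norm_eq_abs, abs_of_pos (by positivity)]
      exact inv_lt_one_of_one_lt₀ hp1
    have htend := (summable_pow_mul_geometric_of_norm_lt_one (R := ℝ) 1 hr).tendsto_atTop_zero
    have hB : (0:ℝ) < 1 / (4 * (|c'| + 1)) := by positivity
    filter_upwards [htend.eventually (eventually_lt_nhds hB), eventually_ge_atTop 1]
      with m hm1 hm2
    have hpm : (0:ℝ) < (p:ℝ) ^ m := by positivity
    have h2 : (m : ℝ) / (p:ℝ) ^ m < 1 / (4 * (|c'| + 1)) := by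
      rw [div_eq_mul_inv]
      simpa [inv_pow] using hm1
    rw [div_lt_div_iff₀ hpm (by positivity)] at h2
    have hm1' : (1:ℝ) ≤ (m:ℝ) := by exact_mod_cast hm2
    nlinarith [le_abs_self c', abs_nonneg c']
  obtain ⟨N, hN⟩ := eventually_atTop.1 ((hev.and hgrow).and (eventually_ge_atTop 1))
  set h : ℕ → ℤ := fun m => (padicDist_spec p m x).choose with hh
  have hspec : ∀ m, (h m).natAbs = padicDist p m x ∧ (p : ℤ_[p]) ^ m ∣ x - (h m : ℤ_[p]) :=
    fun m => (padicDist_spec p m x).choose_spec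
  have hstep : ∀ m, N ≤ m → h (m + 1) = h m := by
    intro m hm
    obtain ⟨⟨hle, hlt⟩, hm1⟩ := hN m hm
    obtain ⟨⟨hle', _⟩, _⟩ := hN (m+1) (by omega)
    have hdvd : (p : ℤ_[p]) ^ m ∣ ((h (m+1) - h m : ℤ) : ℤ_[p]) := by
      have e : ((h (m+1) - h m : ℤ) : ℤ_[p]) = (x - h m) - (x - h (m+1)) := by push_cast; ring
      rw [e]
      exact dvd_sub (hspec m).2 (dvd_trans (pow_dvd_pow _ (Nat.le_succ m)) (hspec (m+1)).2)
    have hdvd' : (p ^ m : ℤ) ∣ h (m+1) - h m := by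
      rwa [PadicInt.pow_p_dvd_int_iff] at hdvd
    have habs : |h (m+1) - h m| < (p:ℤ) ^ m := by
      have b0 : |h (m+1) - h m| ≤ ((padicDist p (m+1) x : ℤ)) + ((padicDist p m x : ℤ)) := by
        rw [← (hspec (m+1)).1, ← (hspec m).1]
        have t := abs_sub (h (m+1)) (h m)
        rw [Int.abs_eq_natAbs (h (m+1)), Int.abs_eq_natAbs (h m)] at t
        exact t
      have b1 : (|h (m+1) - h m| : ℝ) ≤ (padicDist p (m+1) x : ℝ) + (padicDist p m x : ℝ) := by
        exact_mod_cast b0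
      have b2 : (|h (m+1) - h m| : ℝ) < (p:ℝ) ^ m := by
        have : (padicDist p (m+1) x : ℝ) + (padicDist p m x : ℝ) ≤ c' * (2 * m + 2) := by
          push_cast at hle' ⊢
          nlinarith
        linarith
      exact_mod_cast b2
    have := Int.eq_zero_of_abs_lt_dvd hdvd' habs
    omega
  have hconst : ∀ m, N ≤ m → h m = h N := by
    intro m hm
    induction m, hm using Nat.le_induction with
    | base => rfl
    | succ m hm ih => rw [hstep m hm, ih]
  refine ⟨h N, ?_⟩
  have hz : ∀ m, N ≤ m → ‖x - (h N : ℤ_[p])‖ ≤ (p:ℝ) ^ (-(m:ℤ)) := by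
    intro m hm
    rw [PadicInt.norm_le_pow_iff_mem_span_pow, Ideal.mem_span_singleton]
    rw [← hconst m hm]
    exact (hspec m).2
  have hz0 : ‖x - (h N : ℤ_[p])‖ ≤ 0 := by
    have htend : Tendsto (fun m : ℕ => (p:ℝ) ^ (-(m:ℤ))) atTop (nhds 0) := by
      have : ∀ m : ℕ, (p:ℝ) ^ (-(m:ℤ)) = ((p:ℝ)⁻¹) ^ m := by
        intro m; rw [zpow_neg, zpow_natCast, inv_pow]
      simp only [this]
      exact tendsto_pow_atTop_nhds_zero_of_lt_one (by positivity) (inv_lt_one_of_one_lt₀ hp1)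
    exact ge_of_tendsto htend (eventually_atTop.2 ⟨N, hz⟩)
  have : x - (h N : ℤ_[p]) = 0 := by
    rwa [← norm_le_zero_iff]
  linear_combination this
end aux


section helper
open Filter

lemma frequently_boundary {P : ℕ → Prop} (h1 : ∃ᶠ m in atTop, P m)
    (h2 : ∃ᶠ m in atTop, ¬ P m) : ∃ᶠ m in atTop, P m ∧ ¬ P (m + 1) := by
  classical
  rw [frequently_atTop] at h1 h2 ⊢
  intro N
  obtain ⟨m, hm, hPm⟩ := h1 N
  obtain ⟨m', hm', hPm'⟩ := h2 (m + 1)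
  have hex : ∃ k, ¬ P (m + 1 + k) := ⟨m' - (m + 1), by rwa [Nat.add_sub_cancel' hm']⟩
  refine ⟨m + Nat.find hex, le_trans hm (Nat.le_add_right _ _), ?_, ?_⟩
  · rcases Nat.eq_zero_or_pos (Nat.find hex) with h0 | hpos
    · rw [h0]; simpa using hPm
    · obtain ⟨k, hk⟩ : ∃ k, Nat.find hex = k + 1 := ⟨Nat.find hex - 1, by omega⟩
      have hmin := Nat.find_min hex (m := k) (by omega)
      rw [not_not] at hmin
      have e : m + Nat.find hex = m + 1 + k := by omega
      rw [e]; exact hmin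
  · have hsp := Nat.find_spec hex
    have e : m + Nat.find hex + 1 = m + 1 + Nat.find hex := by omega
    rw [e]; exact hsp

lemma frequently_fin_exists {n : ℕ} {P : Fin n → ℕ → Prop}
    (h : ∃ᶠ m in atTop, ∃ i, P i m) : ∃ i, ∃ᶠ m in atTop, P i m := by
  by_contra hc
  push_neg at hc
  have hall : ∀ᶠ m in atTop, ∀ i, ¬ P i m := eventually_all.2 hc
  obtain ⟨m, ⟨i, hi⟩, hm⟩ := (h.and_eventually hall).exists
  exact hm i hi
end helper


/-- If the difference multiset `A - A` is weakly equivalent to some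
p-adic non-Liouville finite multiset, then `A` has p-adic non-Liouville differences,
i.e. `A - A` is itself p-adic non-Liouville. -/
theorem nonLiouville_differences_of_weaklyEquivalent
    (p : ℕ) [Fact p.Prime] (A C : Multiset ℤ_[p])
    (hC : PadicNonLiouvilleMultiset p C)
    (h : WeaklyEquivalent p (diffMultiset p A) C) :
    PadicNonLiouvilleMultiset p (diffMultiset p A) := by
  classical
  intro x hxA hxL
  obtain ⟨n, a, b, c, hA, hB, hc, hper⟩ := h
  obtain ⟨j, hj⟩ : ∃ j, a j = x := by
    rw [hA, Multiset.mem_coe, List.mem_ofFn] at hxA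
    exact hxA
  obtain ⟨hxInt, hxLim⟩ := hxL
  obtain ⟨K, hK1, -⟩ := EReal.lt_iff_exists_real_btwn.1 hxLim
  have hcob : IsCoboundedUnder (· ≥ ·) atTop
      (fun m : ℕ => (((padicDist p m x : ℝ) / (m : ℝ)) : EReal)) :=
    isCoboundedUnder_ge_of_le atTop (x := (⊤ : EReal)) (fun _ => le_top)
  have hfreq := frequently_lt_of_liminf_lt hcob hK1
  set B : ℝ := ∑ i : Fin n,
      (if hi : ∃ k : ℤ, b i = (k : ℤ_[p]) then |(hi.choose : ℝ)| else 0) with hBdef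
  have h0 : ∀ i' ∈ Finset.univ, (0:ℝ) ≤
      (fun i : Fin n => if hi : ∃ k : ℤ, b i = (k : ℤ_[p]) then |(hi.choose : ℝ)| else 0) i' := by
    intro i' _
    beta_reduce
    split
    · exact abs_nonneg _
    · exact le_refl 0
  have hBnonneg : 0 ≤ B := Finset.sum_nonneg h0
  have hBterm : ∀ i (hi : ∃ k : ℤ, b i = (k : ℤ_[p])), |(hi.choose : ℝ)| ≤ B := by
    intro i hi
    have h1 := Finset.single_le_sum h0 (Finset.mem_univ i)
    beta_reduce at h1
    rwa [dif_pos hi] at h1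
  set c' : ℝ := c + B + |K| + 1 with hc'def
  have hc'pos : 0 < c' := by have := abs_nonneg K; linarith
  by_cases hev : ∀ᶠ m in Filter.atTop, (padicDist p m x : ℝ) ≤ c' * m
  · obtain ⟨k, hk⟩ := eq_int_of_eventually_padicDist_le p x c' hev
    exact hxInt k hk
  · have hU : ∃ᶠ m in atTop, (padicDist p m x : ℝ) ≤ c' * m := by
      apply (hfreq.and_eventually (eventually_ge_atTop 1)).mono
      rintro m ⟨hlt, hm1⟩
      have hm0 : (0 : ℝ) < m := by exact_mod_cast hm1
      rw [← EReal.coe_div, EReal.coe_lt_coe_iff] at hlt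
      rw [div_lt_iff₀ hm0] at hlt
      have hKabs : K ≤ |K| := le_abs_self K
      nlinarith
    have hnU : ∃ᶠ m in atTop, ¬ ((padicDist p m x : ℝ) ≤ c' * m) := by
      rwa [Filter.not_eventually] at hev
    have hbd := frequently_boundary hU hnU
    have key : ∃ᶠ m in atTop, ∃ i : Fin n, (∀ k : ℤ, b i ≠ (k : ℤ_[p])) ∧ 1 ≤ m ∧
        (padicDist p m (b i) : ℝ) ≤ (c' + 2 * c) * m := by
      apply (hbd.and_eventually (eventually_ge_atTop 1)).mono
      rintro m ⟨⟨hUm, hUm1⟩, hm1⟩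
      obtain ⟨σ, hσ⟩ := hper (m + 1) (by omega)
      set i := σ.symm j with hidef
      have hdist := hσ i
      rw [show σ i = j from Equiv.apply_symm_apply σ j, hj] at hdist
      have hm0 : (0 : ℝ) < m := by exact_mod_cast hm1
      have hmono : (padicDist p m (x - b i) : ℝ) ≤ c * (m + 1) := by
        refine le_trans ?_ (by exact_mod_cast hdist)
        exact_mod_cast padicDist_mono p (x - b i) (Nat.le_succ m)
      have hbiInt : ¬ ∃ k : ℤ, b i = (k : ℤ_[p]) := by
        rintro ⟨k, hk⟩
        apply hUm1
        have tri : padicDist p (m + 1) x ≤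
            padicDist p (m + 1) (x - (k : ℤ_[p])) + padicDist p (m + 1) ((k : ℤ_[p])) := by
          have e : x = (x - (k : ℤ_[p])) + (k : ℤ_[p]) := by ring
          nth_rewrite 1 [e]
          exact padicDist_add_le p (m + 1) _ _
        have hkB : |(k : ℝ)| ≤ B := by
          have hi : ∃ k : ℤ, b i = (k : ℤ_[p]) := ⟨k, hk⟩
          have hch : hi.choose = k := by
            have := hi.choose_spec
            exact (Int.cast_injective (α := ℤ_[p]) (this.symm.trans hk).symm).symm
          have := hBterm i hi
          rwa [hch] at this
        have h1 : (padicDist p (m + 1) (x - (k : ℤ_[p])) : ℝ) ≤ c * (m + 1) := by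
          rw [← hk]; exact_mod_cast hdist
        have h2 : (padicDist p (m + 1) ((k : ℤ_[p])) : ℝ) ≤ |(k : ℝ)| := by
          have := padicDist_int_le p (m + 1) k
          calc (padicDist p (m + 1) ((k : ℤ_[p])) : ℝ) ≤ (k.natAbs : ℝ) := by exact_mod_cast this
            _ = |(k : ℝ)| := by push_cast [Nat.cast_natAbs]; ring
        have tri' : (padicDist p (m + 1) x : ℝ) ≤ c * (m + 1) + |(k : ℝ)| := by
          have := tri
          have tc : (padicDist p (m + 1) x : ℝ) ≤
              (padicDist p (m + 1) (x - (k : ℤ_[p])) : ℝ) +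
              (padicDist p (m + 1) ((k : ℤ_[p])) : ℝ) := by exact_mod_cast this
          linarith
        have : (padicDist p (m + 1) x : ℝ) ≤ c' * (m + 1) := by
          push_cast
          push_cast at tri'
          nlinarith [abs_nonneg K]
        exact_mod_cast this
      refine ⟨i, fun k hk => hbiInt ⟨k, hk⟩, hm1, ?_⟩
      have tri : padicDist p m (b i) ≤ padicDist p m (-(x - b i)) + padicDist p m x := by
        have e : b i = (-(x - b i)) + x := by ring
        nth_rewrite 1 [e]
        exact padicDist_add_le p m _ _
      rw [padicDist_neg] at tri
      have tc : (padicDist p m (b i) : ℝ) ≤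
          (padicDist p m (x - b i) : ℝ) + (padicDist p m x : ℝ) := by exact_mod_cast tri
      have hm1' : (1:ℝ) ≤ (m:ℝ) := by exact_mod_cast hm1
      nlinarith
    obtain ⟨i₀, hfi⟩ := frequently_fin_exists key
    have hbmem : b i₀ ∈ C := by
      rw [hB, Multiset.mem_coe, List.mem_ofFn]
      exact ⟨i₀, rfl⟩
    apply hC (b i₀) hbmem
    obtain ⟨m₀, hm₀⟩ := hfi.exists
    refine ⟨hm₀.1, ?_⟩
    have hlim : Filter.liminf
        (fun m : ℕ => (((padicDist p m (b i₀) : ℝ) / (m : ℝ)) : EReal)) atTop ≤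
        ((c' + 2 * c : ℝ) : EReal) := by
      apply Filter.liminf_le_of_frequently_le'
      apply hfi.mono
      rintro m ⟨-, hm1, hd⟩
      rw [← EReal.coe_div, EReal.coe_le_coe_iff]
      have hm0 : (0 : ℝ) < m := by exact_mod_cast hm1
      rw [div_le_iff₀ hm0]
      exact hd
    exact lt_of_le_of_lt hlim (EReal.coe_lt_top _)
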